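/- (Minimality of smooth sensitivity) Let n be a natural number, b > 0, and let c : (Fin n → ℝ) → ℝ be a bounded function. Suppose S* : (Fin n → ℝ) → ℝ is any b-smooth upper bound on the local sensitivity of c, i.e. S*(σ) ≥ LS_σ(c) for all σ, and S*(σ) ≤ exp(b) · S*(σ') whenever d(σ, σ') = 1. Then S*(σ) ≥ SS_{σ,b}(c) for every stream σ. -/

import Mathlib

/-!
A `b`-smooth bound loses at most a factor `exp b` per changed coordinate, so chaining it along
single-coordinate changes gives `S*(σ') ≤ exp (b · d(σ, σ')) · S*(σ)`. Hence every term
`LS_{σ'}(c) · exp (-b · d(σ, σ'))` of the supremum is at most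
`S*(σ') · exp (-b · d(σ, σ')) ≤ S*(σ)`.
-/

/-- Local sensitivity of `c` at `σ`: the supremum of `|c σ - c σ'|` over streams `σ'`
adjacent to `σ` (Hamming distance 1). -/
noncomputable def localSens {n : ℕ} (c : (Fin n → ℝ) → ℝ) (σ : Fin n → ℝ) : ℝ :=
  sSup {x : ℝ | ∃ σ' : Fin n → ℝ, hammingDist σ σ' = 1 ∧ x = |c σ - c σ'|}

/-- `b`-smooth sensitivity of `c` at `σ`: the supremum of
`LS_{σ'}(c) · exp(-b · d(σ, σ'))` over all streams `σ'`. -/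
noncomputable def smoothSens {n : ℕ} (b : ℝ) (c : (Fin n → ℝ) → ℝ) (σ : Fin n → ℝ) : ℝ :=
  sSup {x : ℝ | ∃ σ' : Fin n → ℝ, x = localSens c σ' * Real.exp (-(b * hammingDist σ σ'))}

open Function

section Hamming

variable {ι : Type*} [Fintype ι] [DecidableEq ι] {β : ι → Type*} [∀ i, DecidableEq (β i)]

lemma hammingDist_update_left_eq_one {x : ∀ i, β i} {i : ι} {a : β i} (h : a ≠ x i) :
    hammingDist (update x i a) x = 1 := by
  have hsupp : ({j | update x i a j ≠ x j} : Finset ι) = {i} := by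
    ext j
    rcases eq_or_ne j i with rfl | hj
    · simp [h]
    · simp [hj]
  rw [hammingDist, hsupp, Finset.card_singleton]

lemma hammingDist_update_right_add_one {x y : ∀ i, β i} {i : ι} (h : x i ≠ y i) :
    hammingDist x (update y i (x i)) + 1 = hammingDist x y := by
  have hsupp : ({j | x j ≠ update y i (x i) j} : Finset ι) =
      ({j | x j ≠ y j} : Finset ι).erase i := by
    ext j
    rcases eq_or_ne j i with rfl | hj
    · simp
    · simp [hj]
  rw [hammingDist, hsupp, Finset.card_erase_add_one (by simpa using h), hammingDist]

lemma exists_hammingDist_eq_of_hammingDist_eq_succ {x y : ∀ i, β i} {k : ℕ}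
    (h : hammingDist x y = k + 1) :
    ∃ z, hammingDist x z = k ∧ hammingDist z y = 1 := by
  obtain ⟨i, hi⟩ : ∃ i, x i ≠ y i := by
    by_contra! hxy
    simp [funext hxy] at h
  exact ⟨update y i (x i), by have := hammingDist_update_right_add_one hi; omega,
    hammingDist_update_left_eq_one hi⟩

lemma le_pow_hammingDist_mul {f : (∀ i, β i) → ℝ} {C : ℝ} (hC : 0 ≤ C)
    (hf : ∀ x y, hammingDist x y = 1 → f x ≤ C * f y) (x y : ∀ i, β i) :
    f x ≤ C ^ hammingDist x y * f y := by
  induction hxy : hammingDist x y generalizing y with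
  | zero => simp [hammingDist_eq_zero.mp hxy]
  | succ k ih =>
    obtain ⟨z, hxz, hzy⟩ := exists_hammingDist_eq_of_hammingDist_eq_succ hxy
    calc f x ≤ C ^ k * f z := ih z hxz
      _ ≤ C ^ k * (C * f y) := by gcongr; exact hf z y hzy
      _ = C ^ (k + 1) * f y := by ring

end Hamming

lemma localSens_nonneg {n : ℕ} (c : (Fin n → ℝ) → ℝ) (σ : Fin n → ℝ) :
    0 ≤ localSens c σ :=
  Real.sSup_nonneg fun _ ⟨_, _, hx⟩ => hx ▸ abs_nonneg _

theorem smoothSens_minimal_general {n : ℕ} (b : ℝ)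
    (c : (Fin n → ℝ) → ℝ)
    (Sstar : (Fin n → ℝ) → ℝ)
    (hub : ∀ σ : Fin n → ℝ, localSens c σ ≤ Sstar σ)
    (hsmooth : ∀ σ σ' : Fin n → ℝ, hammingDist σ σ' = 1 →
      Sstar σ ≤ Real.exp b * Sstar σ')
    (σ : Fin n → ℝ) :
    smoothSens b c σ ≤ Sstar σ := by
  refine Real.sSup_le ?_ ((localSens_nonneg c σ).trans (hub σ))
  rintro _ ⟨σ', rfl⟩
  have hpath : Sstar σ' ≤ Real.exp (b * hammingDist σ σ') * Sstar σ := by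
    rw [hammingDist_comm, mul_comm b, Real.exp_nat_mul]
    exact le_pow_hammingDist_mul (Real.exp_pos b).le hsmooth σ' σ
  calc localSens c σ' * Real.exp (-(b * hammingDist σ σ'))
      ≤ Sstar σ' * Real.exp (-(b * hammingDist σ σ')) := by gcongr; exact hub σ'
    _ ≤ Real.exp (b * hammingDist σ σ') * Sstar σ * Real.exp (-(b * hammingDist σ σ')) := by
        gcongr
    _ = Sstar σ := by rw [mul_right_comm, ← Real.exp_add, add_neg_cancel, Real.exp_zero, one_mul]

/-- (Minimality of smooth sensitivity) Any `b`-smooth upper bound `S*` on the local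
sensitivity of `c` satisfies `S*(σ) ≥ SS_{σ,b}(c)` for every stream `σ`. -/
theorem smoothSens_minimal {n : ℕ} (b : ℝ) (hb : 0 < b)
    (c : (Fin n → ℝ) → ℝ) (M : ℝ) (hM : ∀ σ : Fin n → ℝ, |c σ| ≤ M)
    (Sstar : (Fin n → ℝ) → ℝ)
    (hub : ∀ σ : Fin n → ℝ, localSens c σ ≤ Sstar σ)
    (hsmooth : ∀ σ σ' : Fin n → ℝ, hammingDist σ σ' = 1 →
      Sstar σ ≤ Real.exp b * Sstar σ')
    (σ : Fin n → ℝ) :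
    smoothSens b c σ ≤ Sstar σ :=
  smoothSens_minimal_general b c Sstar hub hsmooth σ
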